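/- Let X be a proper k-dimensional simplicial complex (k ≥ 2) and f = Σ_v c_v y_v a Boolean degree-1 function on X(k). Then for every edge {u,v} ∈ X(1), the coefficients satisfy 2k·c_u·c_v = c_u(1−c_u) + c_v(1−c_v). -/
import Mathlib


open Finset

noncomputable section

/-- A pure `d`-dimensional weighted simplicial complex on a finite vertex set `V`:
a nonempty collection of top faces, each of cardinality `d+1`, together with a
probability distribution on the top faces which is positive on them.  (Faces of
cardinality `j` correspond to faces of dimension `j-1`, i.e. of level `j-1`, in
the paper's indexing; the empty face has level `-1`.) -/
structure WSC (V : Type) [DecidableEq V] [Fintype V] (d : ℕ) : Type where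
  top : Finset (Finset V)
  top_nonempty : top.Nonempty
  pure : ∀ s ∈ top, s.card = d + 1
  w : Finset V → ℝ
  w_pos : ∀ s ∈ top, 0 < w s
  w_supp : ∀ s, s ∉ top → w s = 0
  w_sum : ∑ s ∈ top, w s = 1

namespace WSC

variable {V : Type} [DecidableEq V] [Fintype V] {d : ℕ} (X : WSC V d)

/-- The faces of cardinality `j`, i.e. the set `X(j-1)` in the paper's indexing. -/
def faces (j : ℕ) : Finset (Finset V) :=
  (Finset.univ : Finset V).powerset.filter (fun t => t.card = j ∧ ∃ s ∈ X.top, t ⊆ s)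

/-- All faces of the complex. -/
def allFaces : Finset (Finset V) :=
  (Finset.univ : Finset V).powerset.filter (fun t => ∃ s ∈ X.top, t ⊆ s)

/-- The induced distribution `Dist_{j-1}` on the faces of cardinality `j`:
choose a top face according to `w` and then a uniformly random subset of
cardinality `j` of it. -/
def dist (j : ℕ) (t : Finset V) : ℝ :=
  (∑ s ∈ X.top.filter (fun s => t ⊆ s), X.w s) / (d + 1).choose j

/-- The weighted inner product on the space `C^{j-1}` of functions on the faces
of cardinality `j`. -/
def ip (j : ℕ) (f g : Finset V → ℝ) : ℝ :=
  ∑ t ∈ X.faces j, X.dist j t * f t * g t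

/-- The up (averaging) operator `U_{j-1}` sending functions on cardinality-`j`
faces to functions on cardinality-`(j+1)` faces. -/
def up (_X : WSC V d) (j : ℕ) (g : Finset V → ℝ) : Finset V → ℝ :=
  fun s => (∑ x ∈ s, g (s.erase x)) / ((j : ℝ) + 1)

/-- The down (averaging) operator `D_{j-1}` sending functions on cardinality-`j`
faces to functions on cardinality-`(j-1)` faces. -/
def down (j : ℕ) (f : Finset V → ℝ) : Finset V → ℝ :=
  fun t => (∑ s ∈ (X.faces j).filter (fun s => t ⊆ s), X.dist j s * f s) /
    ((j : ℝ) * X.dist (j - 1) t)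

/-- `m`-fold iterate of the up operator, starting from cardinality `j`. -/
def upIter (X : WSC V d) (j : ℕ) : ℕ → (Finset V → ℝ) → (Finset V → ℝ)
  | 0, g => g
  | (m+1), g => X.up (j + m) (upIter X j m g)

/-- `ys s` is the indicator function of containing the face `s`. -/
def ys (s t : Finset V) : ℝ := if s ⊆ t then 1 else 0

/-- `ys s` viewed as a function on the top faces `X(d)` (zero elsewhere). -/
def ysRes (s : Finset V) : Finset V → ℝ :=
  fun r => if r ∈ X.faces (d + 1) ∧ s ⊆ r then 1 else 0

/-- `X` is proper: all the up operators `U_i`, `-1 ≤ i ≤ d-1`, have trivial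
kernel (as operators on functions supported on the faces). -/
def Proper : Prop :=
  ∀ j, j ≤ d → ∀ g : Finset V → ℝ,
    (∀ t, t ∉ X.faces j → g t = 0) →
    (∀ s ∈ X.faces (j + 1), X.up j g s = 0) →
    ∀ t, g t = 0

/-- `h` is a harmonic function at cardinality `j`, i.e. an element of
`H^{j-1} = ker D_{j-1}` (for `j = 0` this is all of `C^{-1}`). -/
def Harmonic (j : ℕ) (h : Finset V → ℝ) : Prop :=
  (∀ t, t ∉ X.faces j → h t = 0) ∧
  (1 ≤ j → ∀ t ∈ X.faces (j - 1), X.down j h t = 0)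

/-- The non-lazy upper random walk `M⁺_{j-1}` on functions on cardinality-`j`
faces: go up to a random cardinality-`(j+1)` face and back down to a distinct
cardinality-`j` face. -/
def Mplus (j : ℕ) (f : Finset V → ℝ) : Finset V → ℝ :=
  fun t => ∑ s ∈ (X.faces (j + 1)).filter (fun s => t ⊆ s),
    (X.dist (j + 1) s / (((j : ℝ) + 1) * X.dist j t)) *
      ((∑ x ∈ t, f (s.erase x)) / (j : ℝ))

/-- The lower random walk `U_{j-2} D_{j-1}` on functions on cardinality-`j` faces. -/
def lower (j : ℕ) (f : Finset V → ℝ) : Finset V → ℝ :=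
  fun t => X.up (j - 1) (X.down j f) t

/-- `X` is a `γ`-high-dimensional expander: `‖M⁺_j - U_{j-1} D_j‖ ≤ γ` for all
paper levels `0 ≤ j ≤ d-1`, where the operator norm is with respect to the
weighted `L²` structure, expressed via quadratic forms. -/
def IsHDX (γ : ℝ) : Prop :=
  ∀ j, j + 1 ≤ d → ∀ f : Finset V → ℝ,
    X.ip (j + 1) (fun t => X.Mplus (j + 1) f t - X.lower (j + 1) f t)
      (fun t => X.Mplus (j + 1) f t - X.lower (j + 1) f t)
    ≤ γ ^ 2 * X.ip (j + 1) f f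

/-- The probability that a random cardinality-`m` face contains `r`. -/
def distAbove (m : ℕ) (r : Finset V) : ℝ :=
  ∑ s ∈ (X.faces m).filter (fun s => r ⊆ s), X.dist m s

/-- Expectation of a vertex function of the link of `r` under the link's vertex
distribution. -/
def linkEv (r : Finset V) (f : V → ℝ) : ℝ :=
  ∑ s ∈ (X.faces (r.card + 1)).filter (fun s => r ⊆ s),
    (X.dist (r.card + 1) s / X.distAbove (r.card + 1) r) * ∑ x ∈ s \ r, f x

/-- Expectation of `f(x) · g(y)` over a uniformly oriented random edge `(x,y)`
of the underlying graph of the link of `r`, i.e. the quadratic form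
`⟨f, A_r g⟩` of the link's adjacency operator. -/
def linkEe (r : Finset V) (f g : V → ℝ) : ℝ :=
  ∑ s ∈ (X.faces (r.card + 2)).filter (fun s => r ⊆ s),
    (X.dist (r.card + 2) s / X.distAbove (r.card + 2) r) *
      ((∑ x ∈ s \ r, ∑ y ∈ (s \ r).erase x, f x * g y) / 2)

/-- The two-sided spectral bound `λ(A_r) ≤ γ` for the underlying graph of the
link of `r`, in its equivalent quadratic-form formulation
`|⟨f, A_r g⟩ - E[f]·E[g]| ≤ γ‖f‖‖g‖`. -/
def LinkBound (r : Finset V) (γ : ℝ) : Prop :=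
  ∀ f g : V → ℝ,
    |X.linkEe r f g - X.linkEv r f * X.linkEv r g| ≤
      γ * Real.sqrt (X.linkEv r (fun x => f x ^ 2)) *
        Real.sqrt (X.linkEv r (fun x => g x ^ 2))

/-- `X` is a `γ`-two-sided link expander: every link (with a nonempty underlying
graph) satisfies `λ(A_r) ≤ γ`. -/
def TwoSidedLinkExpander (γ : ℝ) : Prop :=
  ∀ r ∈ X.allFaces, r.card + 2 ≤ d + 1 → X.LinkBound r γ

end WSC

section Aux

variable {V : Type} [DecidableEq V] [Fintype V] {k : ℕ}

/-- The quadratic "defect" function. -/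
noncomputable def Qf (k : ℕ) (c : V → ℝ) (t : Finset V) : ℝ :=
  (k : ℝ) * ((∑ x ∈ t, c x) ^ 2 - ∑ x ∈ t, (c x) ^ 2)
    - ((t.card : ℝ) - 1) * ((∑ x ∈ t, c x) - ∑ x ∈ t, (c x) ^ 2)

lemma mem_faces_iff (X : WSC V k) (j : ℕ) (t : Finset V) :
    t ∈ X.faces j ↔ t.card = j ∧ ∃ s ∈ X.top, t ⊆ s := by
  simp [WSC.faces]

lemma sum_Qf_erase (k : ℕ) (c : V → ℝ) (t : Finset V) :
    ∑ x ∈ t, Qf k c (t.erase x) = ((t.card : ℝ) - 2) * Qf k c t := by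
  rcases t.eq_empty_or_nonempty with rfl | ht
  · simp [Qf]
  have hcard : 1 ≤ t.card := Finset.card_pos.mpr ht
  set S := ∑ x ∈ t, c x with hS
  set T := ∑ x ∈ t, (c x) ^ 2 with hT
  have hstep : ∀ x ∈ t, Qf k c (t.erase x) =
      ((k : ℝ) * (S ^ 2 - T) - ((t.card : ℝ) - 2) * (S - T))
        + (-2 * (k : ℝ) * S + ((t.card : ℝ) - 2)) * c x
        + (2 * (k : ℝ) - ((t.card : ℝ) - 2)) * (c x) ^ 2 := by
    intro x hx
    unfold Qf
    rw [Finset.sum_erase_eq_sub hx (f := c),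
      Finset.sum_erase_eq_sub hx (f := fun y => (c y) ^ 2),
      Finset.card_erase_of_mem hx, Nat.cast_sub hcard]
    push_cast
    ring
  rw [Finset.sum_congr rfl hstep]
  simp only [Finset.sum_add_distrib, Finset.sum_const, ← Finset.mul_sum, nsmul_eq_mul]
  unfold Qf
  rw [← hS, ← hT]
  ring

/-- The iterated (restricted) up chain, starting from the restriction of `Qf`
to the cardinality-2 faces. -/
noncomputable def chainF (X : WSC V k) (c : V → ℝ) : ℕ → Finset V → ℝ
  | 0 => fun t => if t ∈ X.faces 2 then Qf k c t else 0
  | (m + 1) => fun t => if t ∈ X.faces (m + 3) then X.up (m + 2) (chainF X c m) t else 0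

noncomputable def aCoef : ℕ → ℝ
  | 0 => 1
  | (m + 1) => aCoef m * (m + 1) / (m + 3)

lemma aCoef_pos : ∀ m, 0 < aCoef m
  | 0 => one_pos
  | (m + 1) => by
      have := aCoef_pos m
      unfold aCoef
      positivity

lemma chainF_supp (X : WSC V k) (c : V → ℝ) (m : ℕ) (t : Finset V)
    (ht : t ∉ X.faces (m + 2)) : chainF X c m t = 0 := by
  cases m with
  | zero => simp only [chainF]; rw [if_neg ht]
  | succ m => simp only [chainF]; rw [if_neg (by simpa [show m + 1 + 2 = m + 3 by ring] using ht)]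

lemma chainF_eq (X : WSC V k) (c : V → ℝ) :
    ∀ m, ∀ t : Finset V, t.card = m + 2 → (∃ s₀ ∈ X.top, t ⊆ s₀) →
      chainF X c m t = aCoef m * Qf k c t := by
  intro m
  induction m with
  | zero =>
      intro t hcard hsub
      have ht : t ∈ X.faces 2 := (mem_faces_iff X 2 t).mpr ⟨hcard, hsub⟩
      simp only [chainF, if_pos ht, aCoef, one_mul]
  | succ m ih =>
      intro t hcard hsub
      have ht : t ∈ X.faces (m + 3) := (mem_faces_iff X _ t).mpr ⟨by omega, hsub⟩
      simp only [chainF, if_pos ht]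
      obtain ⟨s₀, hs₀, hts₀⟩ := hsub
      have herase : ∀ x ∈ t, chainF X c m (t.erase x) = aCoef m * Qf k c (t.erase x) := by
        intro x hx
        exact ih (t.erase x) (by rw [Finset.card_erase_of_mem hx]; omega)
          ⟨s₀, hs₀, (Finset.erase_subset x t).trans hts₀⟩
      unfold WSC.up
      rw [Finset.sum_congr rfl herase, ← Finset.mul_sum, sum_Qf_erase, hcard]
      rw [show aCoef (m + 1) = aCoef m * (m + 1) / (m + 3) from rfl]
      push_cast
      have h3 : ((m : ℝ) + 3) ≠ 0 := by positivity
      field_simp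
      ring

end Aux

/-- For a Boolean degree-1 function `f = ∑_v c_v y_v` on a
proper `k`-dimensional complex (`k ≥ 2`), the coefficients satisfy, for every
edge `{u,v} ∈ X(1)`: `2k c_u c_v = c_u(1-c_u) + c_v(1-c_v)`. -/
theorem degree_one_coefficients {V : Type} [DecidableEq V] [Fintype V] {k : ℕ}
    (X : WSC V k) (hk : 2 ≤ k) (hX : X.Proper)
    (f : Finset V → ℝ) (c : V → ℝ)
    (hdeg : ∀ s ∈ X.faces (k + 1), f s = ∑ v ∈ s, c v)
    (hbool : ∀ s ∈ X.faces (k + 1), f s = 0 ∨ f s = 1)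
    (u v : V) (huv : u ≠ v) (he : ({u, v} : Finset V) ∈ X.faces 2) :
    2 * (k : ℝ) * c u * c v = c u * (1 - c u) + c v * (1 - c v) := by
  obtain ⟨k', rfl⟩ : ∃ k', k = k' + 2 := ⟨k - 2, by omega⟩
  -- Qf vanishes on top-level faces by the Boolean condition
  have hQtop : ∀ s ∈ X.faces (k' + 2 + 1), Qf (k' + 2) c s = 0 := by
    intro s hs
    have hcard : s.card = k' + 2 + 1 := ((mem_faces_iff X _ s).mp hs).1
    have hfs : f s = ∑ x ∈ s, c x := hdeg s hs
    have hb : (∑ x ∈ s, c x) ^ 2 = ∑ x ∈ s, c x := by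
      rcases hbool s hs with h | h <;> rw [hfs] at h <;> rw [h] <;> ring
    unfold Qf
    rw [hcard, hb]
    push_cast
    ring
  -- the top of the chain vanishes
  have htopchain : ∀ t, chainF X c (k' + 1) t = 0 := by
    intro t
    by_cases ht : t ∈ X.faces (k' + 1 + 2)
    · obtain ⟨hcard, hsub⟩ := (mem_faces_iff X _ t).mp ht
      rw [chainF_eq X c (k' + 1) t hcard hsub]
      have : t ∈ X.faces (k' + 2 + 1) := by
        exact (mem_faces_iff X _ t).mpr ⟨by omega, hsub⟩
      rw [hQtop t this, mul_zero]
    · exact chainF_supp X c (k' + 1) t ht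
  -- downward induction using properness
  have key : ∀ i, i ≤ k' + 1 → ∀ t, chainF X c (k' + 1 - i) t = 0 := by
    intro i
    induction i with
    | zero => intro _ t; exact htopchain t
    | succ i ih =>
        intro hi t
        have hih : ∀ t, chainF X c (k' + 1 - i) t = 0 := ih (by omega)
        set m := k' + 1 - (i + 1) with hm
        have hm1 : k' + 1 - i = m + 1 := by omega
        refine hX (m + 2) (by omega) (chainF X c m) (chainF_supp X c m) ?_ t
        intro s hs
        have := hih s
        rw [hm1] at this
        simp only [chainF] at this
        rwa [if_pos (by simpa [show m + 3 = m + 2 + 1 by ring] using hs)] at this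
  -- extract the desired identity at the edge {u, v}
  have h0 : chainF X c 0 ({u, v} : Finset V) = 0 := by
    have := key (k' + 1) le_rfl ({u, v} : Finset V)
    simpa using this
  simp only [chainF, if_pos he] at h0
  have hcard2 : ({u, v} : Finset V).card = 2 := by
    rw [Finset.card_insert_of_notMem (by simpa using huv), Finset.card_singleton]
  have hsum1 : (∑ x ∈ ({u, v} : Finset V), c x) = c u + c v := Finset.sum_pair huv
  have hsum2 : (∑ x ∈ ({u, v} : Finset V), (c x) ^ 2) = (c u) ^ 2 + (c v) ^ 2 :=
    Finset.sum_pair huv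
  unfold Qf at h0
  rw [hcard2, hsum1, hsum2] at h0
  push_cast at h0 ⊢
  nlinarith [h0]
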